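/- arXiv:0901.3038 — 3 statements merged into one kernel-verified Lean document; each statement's English description precedes it below -/
import Mathlib

section
/- The unit resource achievable region, i.e. the set of all points α•(−2,1,−1) + β•(2,−1,−1) + γ•(0,−1,1) in ℝ³ with α, β, γ ≥ 0, is equal to the set {(C,Q,E) ∈ ℝ³ : C + Q + E ≤ 0, Q + E ≤ 0, C + 2Q ≤ 0}. -/
/-!
The three generators are linearly independent, and the linear forms of the three inequalities
invert the generator matrix up to the factor `-2`: on `α • vTP + β • vSD + γ • vED` one has
`C + Q + E = -2α`, `Q + E = -2β` and `C + 2Q = -2γ`. So the cone is cut out exactly by the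
nonnegativity of these coefficients.
-/

/-- The teleportation vector. -/
def vTP : ℝ × ℝ × ℝ := (-2, 1, -1)

/-- The super-dense coding vector. -/
def vSD : ℝ × ℝ × ℝ := (2, -1, -1)

/-- The entanglement distribution vector. -/
def vED : ℝ × ℝ × ℝ := (0, -1, 1)

/-- The unit resource achievable region: all nonnegative combinations of
teleportation, super-dense coding, and entanglement distribution. -/
def unitRegion : Set (ℝ × ℝ × ℝ) :=
  {p | ∃ α β γ : ℝ, 0 ≤ α ∧ 0 ≤ β ∧ 0 ≤ γ ∧ p = α • vTP + β • vSD + γ • vED}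

theorem smul_vTP_add_smul_vSD_add_smul_vED (α β γ : ℝ) :
    α • vTP + β • vSD + γ • vED = (2 * β - 2 * α, α - β - γ, γ - α - β) := by
  simp only [vTP, vSD, vED, Prod.smul_mk, smul_eq_mul, Prod.mk_add_mk, Prod.mk.injEq]
  refine ⟨?_, ?_, ?_⟩ <;> ring

theorem eq_smul_vTP_add_smul_vSD_add_smul_vED (p : ℝ × ℝ × ℝ) :
    p = (-(p.1 + p.2.1 + p.2.2) / 2) • vTP + (-(p.2.1 + p.2.2) / 2) • vSD +
      (-(p.1 + 2 * p.2.1) / 2) • vED := by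
  obtain ⟨c, q, e⟩ := p
  rw [smul_vTP_add_smul_vSD_add_smul_vED, Prod.mk.injEq, Prod.mk.injEq]
  refine ⟨?_, ?_, ?_⟩ <;> ring

theorem unit_resource_region_eq :
    unitRegion =
      {p : ℝ × ℝ × ℝ |
        p.1 + p.2.1 + p.2.2 ≤ 0 ∧ p.2.1 + p.2.2 ≤ 0 ∧ p.1 + 2 * p.2.1 ≤ 0} := by
  ext p
  constructor
  · rintro ⟨α, β, γ, hα, hβ, hγ, rfl⟩
    rw [smul_vTP_add_smul_vSD_add_smul_vED]
    exact ⟨by linarith, by linarith, by linarith⟩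
  · rintro ⟨hTP, hSD, hED⟩
    exact ⟨_, _, _, by linarith, by linarith, by linarith,
      eq_smul_vTP_add_smul_vSD_add_smul_vED p⟩
end

section
/- If a point (C,Q,E) of the unit resource achievable region satisfies C ≥ 0, Q ≥ 0, and E ≥ 0, then (C,Q,E) = (0,0,0). (In other words, the only point of the unit resource achievable region in the closed all-nonnegative octant is the origin: one cannot generate noiseless resources from nothing.) -/
/-! The functional `C + 2Q + E` takes the value `-1` on each of `vTP`, `vSD`, `vED`, so it is
`≤ 0` on the unit region, with equality only for zero coefficients. On the nonnegative octant
it is `≥ 0`, hence a point of the region lying there is the combination with all coefficients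
zero. -/

def resourceWeight (p : ℝ × ℝ × ℝ) : ℝ := p.1 + 2 * p.2.1 + p.2.2

lemma resourceWeight_combination (α β γ : ℝ) :
    resourceWeight (α • vTP + β • vSD + γ • vED) = -(α + β + γ) := by
  simp only [resourceWeight, vTP, vSD, vED, Prod.smul_mk, Prod.mk_add_mk, smul_eq_mul]
  ring

lemma resourceWeight_nonneg {p : ℝ × ℝ × ℝ} (hC : 0 ≤ p.1) (hQ : 0 ≤ p.2.1) (hE : 0 ≤ p.2.2) :
    0 ≤ resourceWeight p := by
  unfold resourceWeight
  positivity

/-- The only point of the unit resource achievable region in the closed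
all-nonnegative octant is the origin. -/
theorem unit_region_nonneg_octant_trivial (p : ℝ × ℝ × ℝ)
    (hp : p ∈ unitRegion) (hC : 0 ≤ p.1) (hQ : 0 ≤ p.2.1) (hE : 0 ≤ p.2.2) :
    p = (0, 0, 0) := by
  obtain ⟨α, β, γ, hα, hβ, hγ, rfl⟩ := hp
  have hweight := resourceWeight_nonneg hC hQ hE
  rw [resourceWeight_combination] at hweight
  obtain ⟨rfl, rfl, rfl⟩ : α = 0 ∧ β = 0 ∧ γ = 0 :=
    ⟨by linarith, by linarith, by linarith⟩
  simp only [zero_smul, add_zero]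
  rfl
end

section
/- Every point (C,Q,E) ∈ ℝ³ with C ≤ 0, Q ≤ 0, and E ≤ 0 lies in the unit resource achievable region; that is, the entire closed all-nonpositive octant can be written in the form α•(−2,1,−1) + β•(2,−1,−1) + γ•(0,−1,1) with α, β, γ ≥ 0. -/
namespace unitRegion

theorem add_mem {p q : ℝ × ℝ × ℝ} (hp : p ∈ unitRegion) (hq : q ∈ unitRegion) :
    p + q ∈ unitRegion := by
  obtain ⟨α, β, γ, hα, hβ, hγ, rfl⟩ := hp
  obtain ⟨α', β', γ', hα', hβ', hγ', rfl⟩ := hq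
  refine ⟨α + α', β + β', γ + γ', add_nonneg hα hα', add_nonneg hβ hβ', add_nonneg hγ hγ', ?_⟩
  simp only [add_smul]
  abel

theorem smul_mem {c : ℝ} (hc : 0 ≤ c) {p : ℝ × ℝ × ℝ} (hp : p ∈ unitRegion) :
    c • p ∈ unitRegion := by
  obtain ⟨α, β, γ, hα, hβ, hγ, rfl⟩ := hp
  refine ⟨c * α, c * β, c * γ, mul_nonneg hc hα, mul_nonneg hc hβ, mul_nonneg hc hγ, ?_⟩
  simp only [smul_add, mul_smul]

theorem neg_C_mem : ((-1, 0, 0) : ℝ × ℝ × ℝ) ∈ unitRegion :=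
  ⟨1 / 2, 0, 1 / 2, by norm_num, le_rfl, by norm_num, by norm_num [vTP, vSD, vED]⟩

theorem neg_Q_mem : ((0, -1, 0) : ℝ × ℝ × ℝ) ∈ unitRegion :=
  ⟨1 / 2, 1 / 2, 1, by norm_num, by norm_num, zero_le_one, by norm_num [vTP, vSD, vED]⟩

theorem neg_E_mem : ((0, 0, -1) : ℝ × ℝ × ℝ) ∈ unitRegion :=
  ⟨1 / 2, 1 / 2, 0, by norm_num, by norm_num, le_rfl, by norm_num [vTP, vSD, vED]⟩

end unitRegion

/-- The entire closed all-nonpositive octant lies in the unit resource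
achievable region. -/
theorem nonpos_octant_subset_unit_region (p : ℝ × ℝ × ℝ)
    (hC : p.1 ≤ 0) (hQ : p.2.1 ≤ 0) (hE : p.2.2 ≤ 0) :
    p ∈ unitRegion := by
  have hp : p = (-p.1) • ((-1, 0, 0) : ℝ × ℝ × ℝ) + (-p.2.1) • ((0, -1, 0) : ℝ × ℝ × ℝ)
      + (-p.2.2) • ((0, 0, -1) : ℝ × ℝ × ℝ) := by
    simp
  rw [hp]
  exact unitRegion.add_mem
    (unitRegion.add_mem (unitRegion.smul_mem (neg_nonneg.2 hC) unitRegion.neg_C_mem)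
      (unitRegion.smul_mem (neg_nonneg.2 hQ) unitRegion.neg_Q_mem))
    (unitRegion.smul_mem (neg_nonneg.2 hE) unitRegion.neg_E_mem)
end
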